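/- Fix a finite index set ι with |ι| = n, partitioned into m nonempty blocks b₁,…,b_m, and let A be a positive semidefinite Hermitian complex matrix indexed by ι×ι, with block-diagonal pinching A'. Then for every integer k with 0 ≤ k ≤ n, σ_k(A) ≤ σ_k(A'), and moreover σ_k(A') = Σ ∏_{i=1}^m σ_{l_i}(A_{b_i}), the sum being over all tuples (l₁,…,l_m) of nonnegative integers with l₁ + ⋯ + l_m = k. (Lemma 6.3 (2), inequality (6.14).) -/

import Mathlib

/-!
A principal minor of the pinching `A'` is the product of the corresponding principal minors of
the diagonal blocks, so Fischer's inequality `det M ≤ ∏ det M_b` for positive semidefinite `M`,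
applied to every principal submatrix of `A`, gives `σ_k(A) ≤ σ_k(A')`. Fischer's inequality
follows by induction on the number of blocks from the two-block case, where the Schur complement
`D - Bᴴ A⁻¹ B` is positive semidefinite and `det (D - S) ≤ det D` for `S ≥ 0`. Sorting the
`k`-subsets of `ι` by the sizes of their intersections with the blocks turns `σ_k(A')` into the
convolution of the `σ_l(A_b)`.
-/

open Matrix ComplexOrder

/-- `esymm A k` is the `k`-th elementary symmetric function of the eigenvalues of the
Hermitian matrix `A`, computed as the (real part of the) sum of all `k × k` principal
minors of `A`. -/
noncomputable def esymm {ι : Type*} [Fintype ι] [DecidableEq ι]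
    (A : Matrix ι ι ℂ) (k : ℕ) : ℝ :=
  (∑ S ∈ Finset.powersetCard k (Finset.univ : Finset ι),
    (A.submatrix (fun i : {x : ι // x ∈ S} => (i : ι))
      (fun i : {x : ι // x ∈ S} => (i : ι))).det).re

open Finset

lemma Finset.filter_mem_apply_eq {ι β : Type*} [Fintype ι] [DecidableEq ι] [DecidableEq β]
    {T : β → Finset ι} {blk : ι → β} (hT : ∀ b, T b ⊆ ({i | blk i = b} : Finset ι))
    (b : β) :
    ({i | i ∈ T (blk i)} : Finset ι).filter (blk · = b) = T b := by
  ext i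
  have hTb : i ∈ T b → blk i = b := fun hi => (mem_filter.1 (hT b hi)).2
  simp only [mem_filter, mem_univ, true_and]
  exact ⟨fun ⟨hi, hb⟩ => hb ▸ hi, fun hi => ⟨(hTb hi).symm ▸ hi, hTb hi⟩⟩

theorem Finset.sum_powersetCard_prod_filter {ι β R : Type*} [Fintype ι] [DecidableEq ι]
    [Fintype β] [DecidableEq β] [CommSemiring R] (blk : ι → β) (k : ℕ)
    (g : β → Finset ι → R) :
    ∑ S ∈ powersetCard k univ, ∏ b, g b (S.filter (blk · = b)) =
      ∑ l ∈ piAntidiag univ k, ∏ b, ∑ T ∈ powersetCard (l b) {i | blk i = b}, g b T := by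
  have card_eq_sum (S : Finset ι) : #S = ∑ b, #(S.filter (blk · = b)) :=
    card_eq_sum_card_fiberwise fun i _ => mem_univ (blk i)
  simp_rw [prod_univ_sum, sum_sigma']
  refine sum_nbij'
    (fun S => ⟨fun b => #(S.filter (blk · = b)), fun b => S.filter (blk · = b)⟩)
    (fun p => ({i | i ∈ p.2 (blk i)} : Finset ι)) ?_ ?_ ?_ ?_ fun _ _ => rfl
  · intro S hS
    simp only [mem_sigma, mem_piAntidiag, mem_univ, implies_true, and_true, Fintype.mem_piFinset,
      mem_powersetCard, subset_univ, true_and] at hS ⊢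
    exact ⟨(card_eq_sum S).symm.trans hS, fun b => filter_subset_filter _ (subset_univ S)⟩
  · rintro ⟨l, T⟩ hT
    simp only [mem_sigma, mem_piAntidiag, mem_univ, implies_true, and_true, Fintype.mem_piFinset,
      mem_powersetCard, subset_univ, true_and] at hT ⊢
    rw [card_eq_sum, ← hT.1]
    exact sum_congr rfl fun b _ => by rw [filter_mem_apply_eq (fun b => (hT.2 b).1), (hT.2 b).2]
  · intro S _
    ext i
    simp
  · rintro ⟨l, T⟩ hT
    simp only [mem_sigma, mem_piAntidiag, mem_univ, implies_true, and_true, Fintype.mem_piFinset,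
      mem_powersetCard] at hT
    simp only [filter_mem_apply_eq (fun b => (hT.2 b).1), (hT.2 _).2]

namespace Matrix

section DetInequalities

variable {𝕜 n : Type*} [RCLike 𝕜] [Fintype n] [DecidableEq n]

lemma PosSemidef.one_le_det_one_add {Z : Matrix n n 𝕜} (hZ : Z.PosSemidef) :
    1 ≤ (1 + Z).det := by
  set U := hZ.1.eigenvectorUnitary
  have hconj : 1 + Z = (U : Matrix n n 𝕜) * (1 + diagonal (RCLike.ofReal ∘ hZ.1.eigenvalues)) *
      star (U : Matrix n n 𝕜) := by
    conv_lhs => rw [hZ.1.spectral_theorem, Unitary.conjStarAlgAut_apply]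
    rw [mul_add, add_mul, mul_one, Unitary.mul_star_self_of_mem U.2]
  rw [hconj, det_mul_comm, ← Matrix.mul_assoc, Unitary.star_mul_self_of_mem U.2, one_mul,
    ← diagonal_one, diagonal_add, det_diagonal]
  exact one_le_prod fun i _ =>
    le_add_of_nonneg_right (RCLike.ofReal_nonneg.2 (hZ.eigenvalues_nonneg i))

open scoped MatrixOrder in
lemma PosSemidef.det_le_det_add {X Y : Matrix n n 𝕜} (hX : X.PosSemidef) (hY : Y.PosSemidef) :
    X.det ≤ (X + Y).det := by
  by_cases hXd : X.PosDef
  · obtain ⟨B, hB, rfl⟩ :=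
      CStarAlgebra.isStrictlyPositive_iff_eq_star_mul_self.1 hXd.isStrictlyPositive
    have hBdet : IsUnit B.det := (isUnit_iff_isUnit_det B).1 hB
    have hfactor : star B * B + Y = star B * (1 + B⁻¹ᴴ * Y * B⁻¹) * B := by
      have : star B * B⁻¹ᴴ = 1 := by
        rw [star_eq_conjTranspose, ← conjTranspose_mul, nonsing_inv_mul _ hBdet,
          conjTranspose_one]
      simp only [mul_add, add_mul, mul_one, ← Matrix.mul_assoc, this, one_mul]
      rw [Matrix.mul_assoc _ B⁻¹, nonsing_inv_mul _ hBdet, mul_one]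
    have hdet : (star B * (1 + B⁻¹ᴴ * Y * B⁻¹) * B).det
        = (star B * B).det * (1 + B⁻¹ᴴ * Y * B⁻¹).det := by
      rw [det_mul, det_mul, det_mul, mul_right_comm]
    rw [hfactor, hdet]
    exact le_mul_of_one_le_right hX.det_nonneg
      (hY.conjTranspose_mul_mul_same B⁻¹).one_le_det_one_add
  · rw [hX.posDef_iff_det_ne_zero, not_not] at hXd
    exact hXd ▸ (hX.add hY).det_nonneg

lemma PosSemidef.det_le_det_toBlocks₁₁_mul_det_toBlocks₂₂ {m : Type*} [Fintype m]
    [DecidableEq m] {M : Matrix (m ⊕ n) (m ⊕ n) 𝕜} (hM : M.PosSemidef) :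
    M.det ≤ M.toBlocks₁₁.det * M.toBlocks₂₂.det := by
  obtain ⟨A, B, C, D, rfl⟩ : ∃ A B C D, M = fromBlocks A B C D :=
    ⟨_, _, _, _, (fromBlocks_toBlocks M).symm⟩
  obtain ⟨-, rfl, -, -⟩ := isHermitian_fromBlocks_iff.1 hM.1
  rw [toBlocks_fromBlocks₁₁, toBlocks_fromBlocks₂₂]
  have hA : A.PosSemidef := hM.submatrix Sum.inl
  by_cases hAd : A.PosDef
  · let _ : Invertible A := invertibleOfIsUnitDet A (isUnit_iff_ne_zero.2 hAd.det_pos.ne')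
    have hSchur : (D - Bᴴ * A⁻¹ * B).PosSemidef := (PosDef.fromBlocks₁₁ B D hAd).1 hM
    have hD := hSchur.det_le_det_add (hAd.inv.posSemidef.conjTranspose_mul_mul_same B)
    rw [sub_add_cancel] at hD
    rw [det_fromBlocks₁₁, invOf_eq_nonsing_inv]
    exact mul_le_mul_of_nonneg_left hD hA.det_nonneg
  · have hMd : ¬ (fromBlocks A B Bᴴ D).PosDef := fun h => hAd (h.submatrix Sum.inl_injective)
    rw [hA.posDef_iff_det_ne_zero, not_not] at hAd
    rw [hM.posDef_iff_det_ne_zero, not_not] at hMd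
    rw [hAd, hMd, zero_mul]

end DetInequalities

lemma det_toSquareBlock_toSquareBlockProp_of_ne {R ι β : Type*} [CommRing R] [Fintype ι]
    [DecidableEq ι] [DecidableEq β] (A : Matrix ι ι R) (blk : ι → β) {b c : β}
    (hcb : c ≠ b) :
    ((A.toSquareBlockProp (blk · ≠ b)).toSquareBlock (blk ∘ Subtype.val) c).det
      = (A.toSquareBlock blk c).det := by
  rw [← det_submatrix_equiv_self
    (Equiv.subtypeSubtypeEquivSubtype fun {i} (h : blk i = c) => h ▸ hcb) (A.toSquareBlock blk c)]
  rfl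

/-- Fischer's inequality. -/
theorem PosSemidef.det_le_prod_det_toSquareBlock {𝕜 ι β : Type*} [RCLike 𝕜] [Fintype ι]
    [DecidableEq ι] [Fintype β] [DecidableEq β] {A : Matrix ι ι 𝕜} (hA : A.PosSemidef)
    (blk : ι → β) : A.det ≤ ∏ b, (A.toSquareBlock blk b).det := by
  suffices key : ∀ s : Finset β, ∀ {ι : Type _} [Fintype ι] [DecidableEq ι]
      {A : Matrix ι ι 𝕜} (blk : ι → β), A.PosSemidef → (∀ i, blk i ∈ s) →
      A.det ≤ ∏ b ∈ s, (A.toSquareBlock blk b).det from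
    key univ blk hA fun i => mem_univ _
  intro s
  induction s using Finset.induction_on with
  | empty =>
    intro ι _ _ A blk _ hs
    have : IsEmpty ι := ⟨fun i => notMem_empty _ (hs i)⟩
    simp
  | insert b s hb ih =>
    intro ι _ _ A blk hA hs
    have hsplit :=
      (hA.submatrix (Equiv.sumCompl (blk · = b))).det_le_det_toBlocks₁₁_mul_det_toBlocks₂₂
    rw [det_submatrix_equiv_self] at hsplit
    have hrest := ih (blk ∘ Subtype.val) (hA.submatrix (Subtype.val : {i // blk i ≠ b} → ι))
      fun i => (mem_insert.1 (hs i.1)).resolve_left i.2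
    rw [prod_insert hb]
    refine hsplit.trans (mul_le_mul_of_nonneg_left (hrest.trans_eq (prod_congr rfl fun c hc => ?_))
      (hA.submatrix _).det_nonneg)
    exact det_toSquareBlock_toSquareBlockProp_of_ne A blk (ne_of_mem_of_not_mem hc hb)

variable {ι κ β R : Type*} [DecidableEq ι] [DecidableEq κ] [DecidableEq β]

def principalMinor [CommRing R] (A : Matrix ι ι R) (S : Finset ι) : R :=
  (A.submatrix ((↑) : S → ι) (↑)).det

def blockPinching [Zero R] (blk : ι → β) (A : Matrix ι ι R) : Matrix ι ι R :=
  of fun i j => if blk i = blk j then A i j else 0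

lemma det_blockPinching [Fintype ι] [Fintype β] [CommRing R] (blk : ι → β)
    (A : Matrix ι ι R) :
    (blockPinching blk A).det = ∏ b, (A.toSquareBlock blk b).det := by
  -- the pinching is block diagonal, hence block triangular for any order on the blocks
  let _ : LinearOrder β := LinearOrder.lift' _ (Fintype.equivFin β).injective
  have hbt : (blockPinching blk A).BlockTriangular blk := fun i j hij => if_neg hij.ne'
  rw [hbt.det_fintype]
  refine prod_congr rfl fun b _ => congrArg det (ext fun i j => ?_)
  exact if_pos (i.2.trans j.2.symm)

lemma principalMinor_map [CommRing R] (A : Matrix ι ι R) (f : κ ↪ ι) (T : Finset κ) :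
    A.principalMinor (T.map f) = (A.submatrix f f).principalMinor T := by
  let e : T ≃ T.map f := Equiv.ofBijective (fun x => ⟨f x, mem_map_of_mem f x.2⟩)
    ⟨fun x y h => Subtype.ext (f.injective (congrArg Subtype.val h)), fun ⟨y, hy⟩ =>
      let ⟨x, hx, hxy⟩ := mem_map.1 hy; ⟨⟨x, hx⟩, Subtype.ext hxy⟩⟩
  exact (det_submatrix_equiv_self e _).symm

lemma sum_principalMinor_powersetCard_filter [Fintype ι] [CommRing R] (A : Matrix ι ι R)
    (p : ι → Prop) [DecidablePred p] (j : ℕ) :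
    ∑ T ∈ powersetCard j {i | p i}, A.principalMinor T
      = ∑ T ∈ powersetCard j univ, (A.toSquareBlockProp p).principalMinor T := by
  rw [← univ_map_subtype, powersetCard_map, sum_map]
  exact sum_congr rfl fun T _ => principalMinor_map A _ T

lemma principalMinor_blockPinching [Fintype β] [CommRing R] (blk : ι → β) (A : Matrix ι ι R)
    (S : Finset ι) :
    (blockPinching blk A).principalMinor S = ∏ b, A.principalMinor (S.filter (blk · = b)) := by
  refine (det_blockPinching (blk ∘ Subtype.val) _).trans (prod_congr rfl fun b _ => ?_)
  let e : {x : S // blk x = b} ≃ S.filter (blk · = b) :=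
    (Equiv.subtypeSubtypeEquivSubtypeInter (· ∈ S) (blk · = b)).trans
      (Equiv.subtypeEquivRight fun _ => by rw [mem_filter])
  exact det_submatrix_equiv_self e (A.submatrix ((↑) : S.filter (blk · = b) → ι) (↑))

lemma PosSemidef.principalMinor_le_principalMinor_blockPinching {𝕜 : Type*} [RCLike 𝕜]
    [Fintype β] {A : Matrix ι ι 𝕜} (hA : A.PosSemidef) (blk : ι → β) (S : Finset ι) :
    A.principalMinor S ≤ (blockPinching blk A).principalMinor S :=
  ((hA.submatrix _).det_le_prod_det_toSquareBlock (blk ∘ Subtype.val)).trans_eq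
    (det_blockPinching _ _).symm

lemma IsHermitian.ofReal_re_det [Fintype ι] {A : Matrix ι ι ℂ} (hA : A.IsHermitian) :
    ((A.det.re : ℝ) : ℂ) = A.det :=
  Complex.conj_eq_iff_re.1 (by rw [← Complex.star_def, ← det_conjTranspose, hA.eq])

end Matrix

lemma esymm_eq_re_sum_principalMinor {ι : Type*} [Fintype ι] [DecidableEq ι]
    (A : Matrix ι ι ℂ) (k : ℕ) :
    esymm A k = (∑ S ∈ powersetCard k univ, A.principalMinor S).re :=
  rfl

lemma Matrix.IsHermitian.ofReal_esymm {ι : Type*} [Fintype ι] [DecidableEq ι]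
    {A : Matrix ι ι ℂ} (hA : A.IsHermitian) (k : ℕ) :
    (esymm A k : ℂ) = ∑ S ∈ powersetCard k univ, A.principalMinor S := by
  rw [esymm_eq_re_sum_principalMinor, Complex.re_sum, Complex.ofReal_sum]
  exact sum_congr rfl fun S _ => (hA.submatrix ((↑) : S → ι)).ofReal_re_det

lemma Matrix.PosSemidef.esymm_le_esymm_blockPinching {ι β : Type*} [Fintype ι] [DecidableEq ι]
    [Fintype β] [DecidableEq β] {A : Matrix ι ι ℂ} (hA : A.PosSemidef) (blk : ι → β)
    (k : ℕ) :
    esymm A k ≤ esymm (blockPinching blk A) k :=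
  (Complex.le_def.1 (sum_le_sum fun S _ =>
    hA.principalMinor_le_principalMinor_blockPinching blk S)).1

lemma Matrix.IsHermitian.esymm_blockPinching {ι β : Type*} [Fintype ι] [DecidableEq ι]
    [Fintype β] [DecidableEq β] {A : Matrix ι ι ℂ} (hA : A.IsHermitian) (blk : ι → β)
    (k : ℕ) :
    esymm (blockPinching blk A) k =
      ∑ l ∈ piAntidiag univ k, ∏ b, esymm (A.toSquareBlock blk b) (l b) := by
  have hblock (b : β) (j : ℕ) : (esymm (A.toSquareBlock blk b) j : ℂ) =
      ∑ T ∈ powersetCard j univ, (A.toSquareBlock blk b).principalMinor T :=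
    (hA.submatrix _).ofReal_esymm j
  rw [← Complex.ofReal_re (∑ l ∈ _, _), esymm_eq_re_sum_principalMinor]
  push_cast
  simp_rw [hblock, principalMinor_blockPinching, sum_powersetCard_prod_filter,
    sum_principalMinor_powersetCard_filter]
  rfl

theorem stmt9_general (ι : Type) [Fintype ι] [DecidableEq ι] (m : ℕ)
    (blk : ι → Fin m)
    (A : Matrix ι ι ℂ) (hA : A.PosSemidef) (k : ℕ) :
    esymm A k ≤ esymm (Matrix.of fun i j => if blk i = blk j then A i j else 0) k ∧
    esymm (Matrix.of fun i j => if blk i = blk j then A i j else 0) k =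
      ∑ l ∈ Finset.Nat.antidiagonalTuple m k, ∏ b : Fin m,
        esymm (A.submatrix (fun i : {x : ι // blk x = b} => (i : ι))
          (fun i : {x : ι // blk x = b} => (i : ι))) (l b) := by
  rw [← piAntidiag_univ_fin_eq_antidiagonalTuple]
  exact ⟨hA.esymm_le_esymm_blockPinching blk k, hA.1.esymm_blockPinching blk k⟩

/-- Lemma 6.3 (2), inequality (6.14): for a positive semidefinite Hermitian matrix `A`
indexed by `ι` (of cardinality `n`) partitioned into `m` nonempty blocks (fibers of a
surjection `blk : ι → Fin m`), with block-diagonal pinching `A'`, one has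
`σ_k(A) ≤ σ_k(A')` for `0 ≤ k ≤ n`, and
`σ_k(A') = Σ_{l₁+⋯+l_m = k} ∏ᵢ σ_{lᵢ}(A_{bᵢ})`. -/
theorem stmt9 (ι : Type) [Fintype ι] [DecidableEq ι] (n m : ℕ)
    (hcard : Fintype.card ι = n)
    (blk : ι → Fin m) (hblk : Function.Surjective blk)
    (A : Matrix ι ι ℂ) (hA : A.PosSemidef) (k : ℕ) (hk : k ≤ n) :
    esymm A k ≤ esymm (Matrix.of fun i j => if blk i = blk j then A i j else 0) k ∧
    esymm (Matrix.of fun i j => if blk i = blk j then A i j else 0) k =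
      ∑ l ∈ Finset.Nat.antidiagonalTuple m k, ∏ b : Fin m,
        esymm (A.submatrix (fun i : {x : ι // blk x = b} => (i : ι))
          (fun i : {x : ι // blk x = b} => (i : ι))) (l b) :=
  stmt9_general ι m blk A hA k
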